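/- arXiv:1612.05222 — 3 statements merged into one kernel-verified Lean document; each statement's English description precedes it below -/
import Mathlib

section
/- If F is the set of bases of a matroid M = (V, I), then H = {S ⊆ E : S₁,...,S_k pairwise disjoint and S₁ ∪ ... ∪ S_k ∈ F} is the set of bases of the matroid M' = (E, I') where I' = {S ⊆ E : S₁,...,S_k pairwise disjoint and S₁ ∪ ... ∪ S_k ∈ I}. In particular, the rank of M' equals the rank of M. -/
/-- A matroid given by its independent sets: nonempty (contains ∅), hereditary,
and satisfying the exchange (augmentation) property. -/
def IsMatroidIndep {α : Type*} [DecidableEq α] (I : Finset α → Prop) : Prop :=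
  I ∅ ∧ (∀ S T : Finset α, I T → S ⊆ T → I S) ∧
    (∀ S T : Finset α, I S → I T → S.card < T.card → ∃ a ∈ T, a ∉ S ∧ I (insert a S))

/-- S_i = {v : (i,v) ∈ S}. -/
def proj {V : Type*} [Fintype V] [DecidableEq V] {k : ℕ}
    (S : Finset (Fin k × V)) (i : Fin k) : Finset V :=
  Finset.univ.filter (fun v => (i, v) ∈ S)

/-- H = {S ⊆ E : S₁,...,S_k pairwise disjoint and S₁ ∪ ... ∪ S_k ∈ F}. -/
def memH {V : Type*} [Fintype V] [DecidableEq V] (k : ℕ)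
    (F : Finset V → Prop) (S : Finset (Fin k × V)) : Prop :=
  (∀ i j : Fin k, i ≠ j → Disjoint (proj S i) (proj S j)) ∧
    F (Finset.univ.biUnion (fun i => proj S i))

/-- A base of a matroid: a maximal independent set. -/
def IsBase {α : Type*} (I : Finset α → Prop) (B : Finset α) : Prop :=
  I B ∧ ∀ B' : Finset α, I B' → B ⊆ B' → B' = B

lemma mem_proj {V : Type*} [Fintype V] [DecidableEq V] {k : ℕ}
    {S : Finset (Fin k × V)} {i : Fin k} {v : V} : v ∈ proj S i ↔ (i, v) ∈ S := by
  simp [proj]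

lemma proj_mono {V : Type*} [Fintype V] [DecidableEq V] {k : ℕ}
    {S T : Finset (Fin k × V)} (h : S ⊆ T) (i : Fin k) : proj S i ⊆ proj T i := by
  intro v hv; exact mem_proj.2 (h (mem_proj.1 hv))

lemma mem_unionProj {V : Type*} [Fintype V] [DecidableEq V] {k : ℕ}
    {S : Finset (Fin k × V)} {v : V} :
    v ∈ Finset.univ.biUnion (fun i => proj S i) ↔ ∃ i, (i, v) ∈ S := by
  simp [mem_proj]

lemma unionProj_mono {V : Type*} [Fintype V] [DecidableEq V] {k : ℕ}
    {S T : Finset (Fin k × V)} (h : S ⊆ T) :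
    Finset.univ.biUnion (fun i => proj S i) ⊆ Finset.univ.biUnion (fun i => proj T i) := by
  intro v hv
  obtain ⟨i, hi⟩ := mem_unionProj.1 hv
  exact mem_unionProj.2 ⟨i, h hi⟩

lemma card_proj_sum {V : Type*} [Fintype V] [DecidableEq V] {k : ℕ}
    (S : Finset (Fin k × V)) : S.card = ∑ i : Fin k, (proj S i).card := by
  rw [Finset.card_eq_sum_card_fiberwise (f := Prod.fst) (fun p _ => Finset.mem_univ p.1)]
  refine Finset.sum_congr rfl (fun i _ => ?_)
  refine Finset.card_bij (fun p _ => p.2) ?_ ?_ ?_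
  · rintro ⟨a, b⟩ hp
    simp only [Finset.mem_filter] at hp
    obtain ⟨h1, h2⟩ := hp
    subst h2
    exact mem_proj.2 h1
  · rintro ⟨a, b⟩ hp ⟨c, d⟩ hq h
    simp only [Finset.mem_filter] at hp hq
    simp only at h
    subst h
    rw [hp.2, hq.2]
  · intro v hv
    exact ⟨(i, v), Finset.mem_filter.2 ⟨mem_proj.1 hv, rfl⟩, rfl⟩

lemma card_eq_union {V : Type*} [Fintype V] [DecidableEq V] {k : ℕ}
    (S : Finset (Fin k × V))
    (hd : ∀ i j : Fin k, i ≠ j → Disjoint (proj S i) (proj S j)) :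
    S.card = (Finset.univ.biUnion (fun i => proj S i)).card := by
  rw [Finset.card_biUnion (fun i _ j _ hij => hd i j hij), card_proj_sum]

lemma bases_card_eq {α : Type*} [DecidableEq α] {I : Finset α → Prop}
    (hI : IsMatroidIndep I) {B C : Finset α} (hB : IsBase I B) (hC : IsBase I C) :
    B.card = C.card := by
  by_contra hne
  rcases Nat.lt_or_ge B.card C.card with h | h
  · obtain ⟨a, _, haB, hins⟩ := hI.2.2 B C hB.1 hC.1 h
    have := hB.2 (insert a B) hins (Finset.subset_insert a B)
    exact haB (this ▸ Finset.mem_insert_self a B)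
  · rcases Nat.lt_or_ge C.card B.card with h' | h'
    · obtain ⟨a, _, haC, hins⟩ := hI.2.2 C B hC.1 hB.1 h'
      have := hC.2 (insert a C) hins (Finset.subset_insert a C)
      exact haC (this ▸ Finset.mem_insert_self a C)
    · exact hne (le_antisymm h' h)

lemma base_union {V : Type*} [Fintype V] [DecidableEq V] {k : ℕ} (hk : 0 < k)
    {I : Finset V → Prop} (hI : IsMatroidIndep I) {S : Finset (Fin k × V)}
    (h : IsBase (memH (V := V) k I) S) :
    IsBase I (Finset.univ.biUnion (fun i => proj S i)) := by
  set u := Finset.univ.biUnion (fun i => proj S i) with hu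
  refine ⟨h.1.2, fun T hT hsub => ?_⟩
  by_contra hne
  have hlt : u.card < T.card :=
    Finset.card_lt_card (lt_of_le_of_ne hsub (fun e => hne e.symm))
  obtain ⟨a, _, hau, hins⟩ := hI.2.2 u T h.1.2 hT hlt
  have hanot : ∀ i : Fin k, (i, a) ∉ S := by
    intro i hi
    exact hau (mem_unionProj.2 ⟨i, hi⟩)
  set i0 : Fin k := ⟨0, hk⟩
  set S' : Finset (Fin k × V) := insert (i0, a) S with hS'
  have hproj : ∀ i : Fin k, proj S' i = if i = i0 then insert a (proj S i) else proj S i := by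
    intro i
    ext v
    by_cases hii : i = i0 <;>
      simp [mem_proj, hS', hii, Prod.ext_iff, eq_comm]
  have hu' : Finset.univ.biUnion (fun i => proj S' i) = insert a u := by
    ext v
    simp only [mem_unionProj, Finset.mem_insert, hu]
    constructor
    · rintro ⟨i, hi⟩
      rcases Finset.mem_insert.1 hi with he | hm
      · left; exact (Prod.ext_iff.1 he).2
      · right; exact ⟨i, hm⟩
    · rintro (rfl | hm)
      · exact ⟨i0, Finset.mem_insert_self _ _⟩
      · obtain ⟨i, hi⟩ := hm
        exact ⟨i, Finset.mem_insert_of_mem hi⟩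
  have hmem : memH (V := V) k I S' := by
    constructor
    · intro i j hij
      rw [hproj i, hproj j]
      have hd := h.1.1 i j hij
      have hanotproj : ∀ j : Fin k, a ∉ proj S j := fun j hj => hanot j (mem_proj.1 hj)
      split_ifs with h1 h2 h2
      · exact absurd (h1.trans h2.symm) hij
      · refine Finset.disjoint_insert_left.2 ⟨hanotproj j, hd⟩
      · refine Finset.disjoint_insert_right.2 ⟨hanotproj i, hd⟩
      · exact hd
    · rw [hu']
      exact hins
  have := h.2 S' hmem (Finset.subset_insert _ _)
  exact hanot i0 (this ▸ Finset.mem_insert_self (i0, a) S)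

/-- if F is the set of bases of a matroid (V,I), then H is the set of
bases of the matroid (E,I') where I' = memH k I; in particular the ranks agree
(all bases of the lifted matroid have the same cardinality as bases of the original). -/
theorem stmt_6 (V : Type*) [Fintype V] [DecidableEq V] (k : ℕ) (hk : 0 < k)
    (I : Finset V → Prop) (hI : IsMatroidIndep I) :
    (∀ S : Finset (Fin k × V),
      memH k (fun T => IsBase I T) S ↔ IsBase (memH (V := V) k I) S) ∧
    (∀ (B : Finset V) (B' : Finset (Fin k × V)),
      IsBase I B → IsBase (memH (V := V) k I) B' → B'.card = B.card) := by
  constructor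
  · intro S
    constructor
    · rintro ⟨hd, hb⟩
      refine ⟨⟨hd, hb.1⟩, fun B' hB' hSB' => ?_⟩
      have hub : Finset.univ.biUnion (fun i => proj B' i) =
          Finset.univ.biUnion (fun i => proj S i) :=
        hb.2 _ hB'.2 (unionProj_mono hSB')
      have hcard : B'.card ≤ S.card := by
        rw [card_eq_union B' hB'.1, card_eq_union S hd, hub]
      exact (Finset.eq_of_subset_of_card_le hSB' hcard).symm
    · intro h
      exact ⟨h.1.1, base_union hk hI h⟩
  · intro B B' hB hB'
    have h1 := base_union hk hI hB'
    rw [card_eq_union B' hB'.1.1]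
    exact bases_card_eq hI h1 hB
end

section
/- Let F be an upwards-closed family over a finite set V with blocker B(F) (the minimal sets intersecting every member of F), and suppose every B ∈ B(F) has |B| ≤ β. Let f be a nonnegative, normalized, monotone submodular function. If x ≥ 0 satisfies Σ_{v∈B} Σ_{S∋v} x(S) ≥ 1 for all B ∈ B(F) (i.e., x is feasible for the natural LP), then the set Q = {v ∈ V : Σ_{S∋v} x(S) ≥ 1/β} belongs to F and f(Q) ≤ β · Σ_S x(S) f(S). Consequently, the natural LP relaxation has integrality gap at most β. -/
/-!
A set `Q` belongs to an upwards-closed family exactly when it meets every member of the blocker.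
A blocker element `B` carries LP mass at least `1` on at most `β` elements, so one of them has
coverage at least `1 / β` and lies in the rounded set `Q`; hence `Q ∈ F`. Scaling `x` by `β`
covers every element of `Q` at least once, and for monotone submodular `f` a fractional cover
bounds `f Q` (the Lovász-extension bound). That bound is proved by induction on `Q`, contracting
`f` at a new element `v` to `S ↦ f (insert v S) - f {v}`, which is again monotone and submodular.
-/

/-- B is a minimal set intersecting every member of F, i.e. B ∈ B(F). -/
def IsBlockerElem {α : Type*} [DecidableEq α] (F : Finset α → Prop) (B : Finset α) : Prop :=
  (∀ A, F A → (B ∩ A).Nonempty) ∧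
    ∀ B' ⊆ B, (∀ A, F A → (B' ∩ A).Nonempty) → B' = B

open Finset

section Blocker

variable {α : Type*} [DecidableEq α] {F : Finset α → Prop}

theorem exists_isBlockerElem_subset {C : Finset α} (hC : ∀ A, F A → (C ∩ A).Nonempty) :
    ∃ B ⊆ C, IsBlockerElem F B := by
  classical
  set T := C.powerset.filter fun B => ∀ A, F A → (B ∩ A).Nonempty
  have hCT : C ∈ T := mem_filter.mpr ⟨mem_powerset_self C, hC⟩
  obtain ⟨B, hBT, hBmin⟩ := T.exists_min_image card ⟨C, hCT⟩
  obtain ⟨hBC, hBtr⟩ := mem_filter.mp hBT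
  refine ⟨B, mem_powerset.mp hBC, hBtr, fun B' hB'B hB'tr => ?_⟩
  have hB'T : B' ∈ T :=
    mem_filter.mpr ⟨mem_powerset.mpr (hB'B.trans (mem_powerset.mp hBC)), hB'tr⟩
  exact eq_of_subset_of_card_le hB'B (hBmin B' hB'T)

theorem mem_of_forall_isBlockerElem_inter_nonempty [Fintype α]
    (hup : ∀ A B : Finset α, F A → A ⊆ B → F B) {Q : Finset α}
    (hQ : ∀ B, IsBlockerElem F B → (B ∩ Q).Nonempty) : F Q := by
  by_contra hFQ
  have hcompl : ∀ A, F A → (Qᶜ ∩ A).Nonempty := by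
    intro A hA
    obtain ⟨a, ha, haQ⟩ := not_subset.mp fun hAQ => hFQ (hup A Q hA hAQ)
    exact ⟨a, mem_inter.mpr ⟨mem_compl.mpr haQ, ha⟩⟩
  obtain ⟨B, hBQ, hB⟩ := exists_isBlockerElem_subset hcompl
  obtain ⟨v, hv⟩ := hQ B hB
  obtain ⟨hvB, hvQ⟩ := mem_inter.mp hv
  exact mem_compl.mp (hBQ hvB) hvQ

end Blocker

theorem exists_mem_inv_le_of_one_le_sum {ι : Type*} {B : Finset ι} {t : ι → ℝ} {β : ℕ}
    (hB : #B ≤ β) (h : 1 ≤ ∑ v ∈ B, t v) : ∃ v ∈ B, (β : ℝ)⁻¹ ≤ t v := by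
  have hBne : B.Nonempty := by
    rw [nonempty_iff_ne_empty]
    rintro rfl
    norm_num at h
  refine exists_le_of_sum_le hBne ?_
  calc ∑ _ ∈ B, (β : ℝ)⁻¹ = #B / β := by rw [sum_const, nsmul_eq_mul, div_eq_mul_inv]
    _ ≤ 1 := div_le_one_of_le₀ (by exact_mod_cast hB) (Nat.cast_nonneg β)
    _ ≤ ∑ v ∈ B, t v := h

section Submodular

variable {V : Type*} [DecidableEq V] {f : Finset V → ℝ}

theorem contract_le_contract (hmono : ∀ A B : Finset V, A ⊆ B → f A ≤ f B) (v : V)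
    {A B : Finset V} (h : A ⊆ B) : f (insert v A) - f {v} ≤ f (insert v B) - f {v} := by
  linarith [hmono _ _ (insert_subset_insert v h)]

theorem contract_submodular (hsub : ∀ A B : Finset V, f (A ∪ B) + f (A ∩ B) ≤ f A + f B)
    (v : V) (A B : Finset V) :
    (f (insert v (A ∪ B)) - f {v}) + (f (insert v (A ∩ B)) - f {v}) ≤
      (f (insert v A) - f {v}) + (f (insert v B) - f {v}) := by
  have := hsub (insert v A) (insert v B)
  rw [← insert_union_distrib, ← insert_inter_distrib] at this
  linarith

theorem contract_le_of_notMem (hnorm : f ∅ = 0)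
    (hsub : ∀ A B : Finset V, f (A ∪ B) + f (A ∩ B) ≤ f A + f B) {v : V} {S : Finset V}
    (hv : v ∉ S) : f (insert v S) - f {v} ≤ f S := by
  have := hsub S {v}
  rw [inter_singleton_of_notMem hv, union_singleton, hnorm] at this
  linarith

theorem le_sum_mul_of_cover [Fintype V] (hnorm : f ∅ = 0)
    (hmono : ∀ A B : Finset V, A ⊆ B → f A ≤ f B)
    (hsub : ∀ A B : Finset V, f (A ∪ B) + f (A ∩ B) ≤ f A + f B)
    {y : Finset V → ℝ} (hy : ∀ S, 0 ≤ y S) {Q : Finset V}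
    (hcov : ∀ v ∈ Q, 1 ≤ ∑ S ∈ univ.filter (fun S : Finset V => v ∈ S), y S) :
    f Q ≤ ∑ S, y S * f S := by
  induction Q using Finset.induction_on generalizing f with
  | empty =>
    rw [hnorm]
    exact sum_nonneg fun S _ => mul_nonneg (hy S) (hnorm ▸ hmono ∅ S (empty_subset S))
  | @insert v Q _ ih =>
    set g : Finset V → ℝ := fun S => f (insert v S) - f {v}
    have hg : g Q ≤ ∑ S, y S * g S :=
      ih (by simp [g]) (fun _ _ => contract_le_contract hmono v) (contract_submodular hsub v)
        fun w hw => hcov w (mem_insert_of_mem hw)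
    have hpoint : ∀ S, y S * g S ≤ y S * f S - if v ∈ S then y S * f {v} else 0 := by
      intro S
      by_cases hvS : v ∈ S
      · simp only [g, insert_eq_of_mem hvS, if_pos hvS]
        exact (mul_sub _ _ _).le
      · rw [if_neg hvS, sub_zero]
        exact mul_le_mul_of_nonneg_left (contract_le_of_notMem hnorm hsub hvS) (hy S)
    have hsum : ∑ S, y S * g S ≤
        ∑ S, y S * f S - (∑ S ∈ univ.filter (fun S : Finset V => v ∈ S), y S) * f {v} := by
      rw [sum_mul, sum_filter, ← sum_sub_distrib]
      exact sum_le_sum fun S _ => hpoint S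
    have hcov_v := mul_le_mul_of_nonneg_right (hcov v (mem_insert_self v Q))
      (hnorm ▸ hmono ∅ {v} (empty_subset _))
    calc f (insert v Q) = g Q + f {v} := by simp [g]
      _ ≤ ∑ S, y S * f S - (∑ S ∈ univ.filter (fun S : Finset V => v ∈ S), y S) * f {v}
            + f {v} := by linarith
      _ ≤ ∑ S, y S * f S := by linarith

end Submodular

theorem stmt_17_general (V : Type*) [Fintype V] [DecidableEq V]
    (F : Finset V → Prop) (hup : ∀ A B : Finset V, F A → A ⊆ B → F B)
    (β : ℕ) (hβ : 0 < β)
    (hbound : ∀ B : Finset V, IsBlockerElem F B → B.card ≤ β)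
    (f : Finset V → ℝ) (hnorm : f ∅ = 0)
    (hmono : ∀ A B : Finset V, A ⊆ B → f A ≤ f B)
    (hsub : ∀ A B : Finset V, f (A ∪ B) + f (A ∩ B) ≤ f A + f B)
    (x : Finset V → ℝ) (hx : ∀ S, 0 ≤ x S)
    (hfeas : ∀ B : Finset V, IsBlockerElem F B →
      1 ≤ ∑ v ∈ B, ∑ S ∈ Finset.univ.filter (fun S : Finset V => v ∈ S), x S) :
    F (Finset.univ.filter (fun v : V =>
        (β : ℝ)⁻¹ ≤ ∑ S ∈ Finset.univ.filter (fun S : Finset V => v ∈ S), x S)) ∧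
    f (Finset.univ.filter (fun v : V =>
        (β : ℝ)⁻¹ ≤ ∑ S ∈ Finset.univ.filter (fun S : Finset V => v ∈ S), x S)) ≤
      (β : ℝ) * ∑ S : Finset V, x S * f S := by
  have hβpos : (0 : ℝ) < β := by exact_mod_cast hβ
  set Q := Finset.univ.filter (fun v : V =>
    (β : ℝ)⁻¹ ≤ ∑ S ∈ Finset.univ.filter (fun S : Finset V => v ∈ S), x S)
  refine ⟨mem_of_forall_isBlockerElem_inter_nonempty hup fun B hB => ?_, ?_⟩
  · obtain ⟨v, hvB, hv⟩ := exists_mem_inv_le_of_one_le_sum (hbound B hB) (hfeas B hB)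
    exact ⟨v, mem_inter.mpr ⟨hvB, mem_filter.mpr ⟨mem_univ v, hv⟩⟩⟩
  · have hscaled :
        ∀ v ∈ Q, 1 ≤ ∑ S ∈ univ.filter (fun S : Finset V => v ∈ S), β * x S := by
      intro v hv
      rw [← mul_sum, ← mul_inv_cancel₀ hβpos.ne']
      exact mul_le_mul_of_nonneg_left (mem_filter.mp hv).2 hβpos.le
    calc f Q ≤ ∑ S, β * x S * f S :=
          le_sum_mul_of_cover hnorm hmono hsub (fun S => mul_nonneg hβpos.le (hx S)) hscaled
      _ = β * ∑ S, x S * f S := by simp only [mul_assoc, ← mul_sum]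

/-- bounded blockers give an integrality gap of at most β:
for any feasible LP solution x, the rounded set Q = {v : Σ_{S∋v} x(S) ≥ 1/β}
lies in F and f(Q) ≤ β · Σ_S x(S) f(S). -/
theorem stmt_17 (V : Type*) [Fintype V] [DecidableEq V]
    (F : Finset V → Prop) (hup : ∀ A B : Finset V, F A → A ⊆ B → F B)
    (β : ℕ) (hβ : 0 < β)
    (hbound : ∀ B : Finset V, IsBlockerElem F B → B.card ≤ β)
    (f : Finset V → ℝ) (hnn : ∀ S, 0 ≤ f S) (hnorm : f ∅ = 0)
    (hmono : ∀ A B : Finset V, A ⊆ B → f A ≤ f B)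
    (hsub : ∀ A B : Finset V, f (A ∪ B) + f (A ∩ B) ≤ f A + f B)
    (x : Finset V → ℝ) (hx : ∀ S, 0 ≤ x S)
    (hfeas : ∀ B : Finset V, IsBlockerElem F B →
      1 ≤ ∑ v ∈ B, ∑ S ∈ Finset.univ.filter (fun S : Finset V => v ∈ S), x S) :
    F (Finset.univ.filter (fun v : V =>
        (β : ℝ)⁻¹ ≤ ∑ S ∈ Finset.univ.filter (fun S : Finset V => v ∈ S), x S)) ∧
    f (Finset.univ.filter (fun v : V =>
        (β : ℝ)⁻¹ ≤ ∑ S ∈ Finset.univ.filter (fun S : Finset V => v ∈ S), x S)) ≤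
      (β : ℝ) * ∑ S : Finset V, x S * f S :=
  stmt_17_general V F hup β hβ hbound f hnorm hmono hsub x hx hfeas
end

section
/- Let G = ([k]+V, E) be the complete bipartite multi-agent graph, F an upwards-closed family over V with blocker B(F), and H = {S ⊆ E : S₁,...,S_k pairwise disjoint and S₁ ∪ ... ∪ S_k ∈ F}. Then the blocker of the upward closure of H is B(H) = {⋃_{v∈B} δ_G(v) : B ∈ B(F)}, where δ_G(v) = [k] × {v}; equivalently, for w ∈ ℝ_+^E, w ∈ P*(H) if and only if the vector z ∈ ℝ_+^V with z(v) = w(δ_G(v)) lies in P*(F). -/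
open Finset

def IsTransversal {α : Type*} [DecidableEq α] (F : Finset α → Prop) (B : Finset α) : Prop :=
  ∀ A, F A → (B ∩ A).Nonempty

theorem isBlockerElem_iff_exists_of_galoisConnection {α β : Type*} [DecidableEq α]
    [DecidableEq β] {F : Finset α → Prop} {H : Finset β → Prop}
    {l : Finset α → Finset β} {u : Finset β → Finset α} (gc : GaloisConnection l u)
    (hul : ∀ B, u (l B) = B) (htrans : ∀ B', IsTransversal H B' ↔ IsTransversal F (u B'))
    (B' : Finset β) :
    IsBlockerElem H B' ↔ ∃ B, IsBlockerElem F B ∧ B' = l B := by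
  have htrans_l : ∀ B, IsTransversal H (l B) ↔ IsTransversal F B := fun B => by
    rw [htrans, hul]
  constructor
  · rintro ⟨hB', hmin⟩
    have hF : IsTransversal F (u B') := (htrans B').1 hB'
    have hlu : l (u B') = B' := hmin _ (gc.l_u_le B') ((htrans_l _).2 hF)
    refine ⟨u B', ⟨hF, fun B'' hsub hB'' => ?_⟩, hlu.symm⟩
    have : l B'' = B' := hmin _ (hlu ▸ gc.monotone_l hsub) ((htrans_l _).2 hB'')
    rw [← this, hul]
  · rintro ⟨B, ⟨hB, hmin⟩, rfl⟩
    refine ⟨(htrans_l B).2 hB, fun B'' hsub hB'' => ?_⟩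
    have hu : u B'' = B := hmin _ (hul B ▸ gc.monotone_u hsub) ((htrans B'').1 hB'')
    exact hsub.antisymm (hu ▸ gc.l_u_le B'')

section Stars

variable {ι V : Type*} [Fintype ι] [DecidableEq ι] [Fintype V] [DecidableEq V]

def coveredVertices (B' : Finset (ι × V)) : Finset V :=
  univ.filter fun v => ∀ i, (i, v) ∈ B'

theorem mem_coveredVertices {B' : Finset (ι × V)} {v : V} :
    v ∈ coveredVertices B' ↔ ∀ i, (i, v) ∈ B' := by
  simp [coveredVertices]

theorem gc_univ_product_coveredVertices :
    GaloisConnection (fun B : Finset V => (univ : Finset ι) ×ˢ B) coveredVertices := by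
  intro B B'
  simp only [subset_iff, mem_product, mem_univ, true_and, mem_coveredVertices, Prod.forall]
  exact ⟨fun h v hv i => h i v hv, fun h i v hv => h hv i⟩

theorem coveredVertices_univ_product [Nonempty ι] (B : Finset V) :
    coveredVertices ((univ : Finset ι) ×ˢ B) = B := by
  ext v
  simp [mem_coveredVertices]

end Stars

section Multiagent

variable {V : Type*} [Fintype V] [DecidableEq V] {k : ℕ}

theorem proj_image_graph (A : Finset V) (f : V → Fin k) (i : Fin k) :
    proj (A.image fun v => (f v, v)) i = A.filter fun v => f v = i := by
  ext v
  simp [proj, and_comm]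

theorem memH_image_graph {F : Finset V → Prop} {A : Finset V} (hA : F A) (f : V → Fin k) :
    memH k F (A.image fun v => (f v, v)) := by
  refine ⟨fun i j hij => ?_, ?_⟩
  · simp only [proj_image_graph, disjoint_filter]
    exact fun v _ hi hj => hij (hi ▸ hj)
  · convert hA
    ext v
    simp [proj_image_graph]

theorem isTransversal_memH_iff [NeZero k] (F : Finset V → Prop) (B' : Finset (Fin k × V)) :
    IsTransversal (memH k F) B' ↔ IsTransversal F (coveredVertices B') := by
  constructor
  · intro hB' A hA
    by_contra hdisj
    have hout : ∀ v, ∃ i : Fin k, v ∈ A → (i, v) ∉ B' := by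
      intro v
      by_cases hv : v ∈ A
      · have : v ∉ coveredVertices B' := fun hc => hdisj ⟨v, mem_inter.2 ⟨hc, hv⟩⟩
        simpa [mem_coveredVertices, hv] using this
      · exact ⟨0, fun h => absurd h hv⟩
    choose f hf using hout
    obtain ⟨e, he⟩ := hB' _ (memH_image_graph hA f)
    obtain ⟨heB', v, hv, rfl⟩ := by simpa only [mem_inter, mem_image] using he
    exact hf v hv heB'
  · rintro hcov S ⟨-, hS⟩
    obtain ⟨v, hv⟩ := hcov _ hS
    simp only [mem_inter, mem_biUnion, mem_univ, true_and] at hv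
    obtain ⟨hvB', i, hvi⟩ := hv
    exact ⟨(i, v), mem_inter.2 ⟨mem_coveredVertices.1 hvB' i, by simpa [proj] using hvi⟩⟩

theorem isBlockerElem_memH_iff [NeZero k] (F : Finset V → Prop) (B' : Finset (Fin k × V)) :
    IsBlockerElem (memH k F) B' ↔ ∃ B, IsBlockerElem F B ∧ B' = univ ×ˢ B :=
  isBlockerElem_iff_exists_of_galoisConnection gc_univ_product_coveredVertices
    coveredVertices_univ_product (isTransversal_memH_iff F) B'

end Multiagent

theorem stmt_19_general (V : Type*) [Fintype V] [DecidableEq V] (k : ℕ) (hk : 0 < k)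
    (F : Finset V → Prop) :
    (∀ B' : Finset (Fin k × V),
      IsBlockerElem (memH (V := V) k F) B' ↔
        ∃ B : Finset V, IsBlockerElem F B ∧
          B' = B.biUnion (fun v => Finset.univ.image (fun i : Fin k => (i, v)))) ∧
    (∀ w : Fin k × V → ℝ, (∀ e, 0 ≤ w e) →
      ((∀ B' : Finset (Fin k × V),
          IsBlockerElem (memH (V := V) k F) B' → 1 ≤ ∑ e ∈ B', w e) ↔
        (∀ B : Finset V, IsBlockerElem F B →
          1 ≤ ∑ v ∈ B, ∑ i : Fin k, w (i, v)))) := by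
  have : NeZero k := ⟨hk.ne'⟩
  simp only [← product_eq_biUnion_right]
  refine ⟨isBlockerElem_memH_iff F, fun w _ => ?_⟩
  simp only [isBlockerElem_memH_iff, ← sum_product_right]
  constructor
  · exact fun h B hB => h _ ⟨B, hB, rfl⟩
  · rintro h _ ⟨B, hB, rfl⟩
    exact h B hB

/-- for an upwards-closed F, the blocker of (the upward closure of)
H consists exactly of the star unions ⋃_{v∈B} δ_G(v) = B × [k] over B ∈ B(F);
equivalently, w ∈ P*(H) iff the vector z(v) = w(δ_G(v)) lies in P*(F). -/
theorem stmt_19 (V : Type*) [Fintype V] [DecidableEq V] (k : ℕ) (hk : 0 < k)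
    (F : Finset V → Prop) (hup : ∀ A B : Finset V, F A → A ⊆ B → F B) :
    (∀ B' : Finset (Fin k × V),
      IsBlockerElem (memH (V := V) k F) B' ↔
        ∃ B : Finset V, IsBlockerElem F B ∧
          B' = B.biUnion (fun v => Finset.univ.image (fun i : Fin k => (i, v)))) ∧
    (∀ w : Fin k × V → ℝ, (∀ e, 0 ≤ w e) →
      ((∀ B' : Finset (Fin k × V),
          IsBlockerElem (memH (V := V) k F) B' → 1 ≤ ∑ e ∈ B', w e) ↔
        (∀ B : Finset V, IsBlockerElem F B →
          1 ≤ ∑ v ∈ B, ∑ i : Fin k, w (i, v)))) :=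
  stmt_19_general V k hk F
end
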